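/- arXiv:2004.04916 — 3 statements merged into one kernel-verified Lean document; each statement's English description precedes it below -/
import Mathlib

section
/- For 0 < β < 1/2 and 0 ≤ r ≤ t, the integral ∫₀ʳ [(t-s)^(-β) - (r-s)^(-β)]² ds is at most (2β / ((1-β)(1-2β))) · (t-r)^(1-2β). -/
/-!
Write `u = r - s`, `v = t - s`. The chord bound `β (v - u) v^(-β-1) ≤ u^(-β) - v^(-β)` for the
convex function `x ↦ x^(-β)`, multiplied by `v^(-β)`, gives the pointwise majorant
`(v^(-β) - u^(-β))² ≤ u^(-2β) - v^(-2β) - 2β (t - r) v^(-2β-1)`, whose integral over `[0, r]` is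
explicit. The chord bound `(t - r) t^(-2β) ≤ (t^(1-2β) - r^(1-2β)) / (1 - 2β)` for the concave
function `x ↦ x^(1-2β)` reduces that integral to at most `2β / (1 - 2β) · (t - r)^(1-2β)`.
-/

open MeasureTheory Real Set

lemma sub_mul_rpow_le_sub_rpow_div {e u v : ℝ} (he : e < 0) (he' : e ≠ -1) (hu : 0 < u)
    (huv : u ≤ v) : (v - u) * v ^ e ≤ (v ^ (e + 1) - u ^ (e + 1)) / (e + 1) := by
  have h0 : (0 : ℝ) ∉ uIcc u v := by
    rw [uIcc_of_le huv]
    exact fun h => hu.not_ge h.1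
  rw [← integral_rpow (Or.inr ⟨he', h0⟩), ← smul_eq_mul, ← intervalIntegral.integral_const]
  refine intervalIntegral.integral_mono_on huv intervalIntegrable_const
    (intervalIntegral.intervalIntegrable_rpow (Or.inr h0)) fun x hx => ?_
  exact rpow_le_rpow_of_nonpos (hu.trans_le hx.1) hx.2 he.le

lemma intervalIntegral.integral_mono_on_Ioo_of_nonneg {f g : ℝ → ℝ} {a b : ℝ} (hab : a ≤ b)
    (hf : ∀ x ∈ Ioo a b, 0 ≤ f x) (h : ∀ x ∈ Ioo a b, f x ≤ g x)
    (hg : IntervalIntegrable g volume a b) : ∫ x in a..b, f x ≤ ∫ x in a..b, g x := by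
  rw [intervalIntegral.integral_of_le hab, intervalIntegral.integral_of_le hab,
    integral_Ioc_eq_integral_Ioo, integral_Ioc_eq_integral_Ioo]
  exact setIntegral_mono_of_nonneg hf h (hg.1.mono_set Ioo_subset_Ioc_self)

lemma intervalIntegrable_const_sub_rpow {e : ℝ} (a b c : ℝ)
    (h : -1 < e ∨ (0 : ℝ) ∉ uIcc (c - b) (c - a)) :
    IntervalIntegrable (fun s => (c - s) ^ e) volume a b := by
  have : IntervalIntegrable (fun x => x ^ e) volume (c - b) (c - a) := by
    rcases h with h | h
    · exact intervalIntegral.intervalIntegrable_rpow' h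
    · exact intervalIntegral.intervalIntegrable_rpow (Or.inr h)
  simpa using (this.comp_sub_left c).symm

lemma integral_const_sub_rpow {e : ℝ} (a b c : ℝ)
    (h : -1 < e ∨ e ≠ -1 ∧ (0 : ℝ) ∉ uIcc (c - b) (c - a)) :
    ∫ s in a..b, (c - s) ^ e = ((c - a) ^ (e + 1) - (c - b) ^ (e + 1)) / (e + 1) := by
  rw [intervalIntegral.integral_comp_sub_left (fun x => x ^ e) c, integral_rpow h]

lemma sq_rpow_neg_sub_rpow_neg_le {β u v : ℝ} (hβ : 0 < β) (hu : 0 < u) (huv : u ≤ v) :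
    (v ^ (-β) - u ^ (-β)) ^ 2
      ≤ u ^ (-(2 * β)) - v ^ (-(2 * β)) - 2 * β * (v - u) * v ^ (-(2 * β) - 1) := by
  have hv : 0 < v := hu.trans_le huv
  have hchord : β * ((v - u) * v ^ (-β - 1)) ≤ u ^ (-β) - v ^ (-β) := by
    have := sub_mul_rpow_le_sub_rpow_div (e := -β - 1) (by linarith) (by linarith) hu huv
    rw [sub_add_cancel, div_neg, ← neg_div, neg_sub, le_div_iff₀ hβ] at this
    linarith
  have hu2 : u ^ (-(2 * β)) = u ^ (-β) * u ^ (-β) := by rw [← rpow_add hu]; ring_nf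
  have hv2 : v ^ (-(2 * β)) = v ^ (-β) * v ^ (-β) := by rw [← rpow_add hv]; ring_nf
  have hv3 : v ^ (-(2 * β) - 1) = v ^ (-β) * v ^ (-β - 1) := by rw [← rpow_add hv]; ring_nf
  rw [hu2, hv2, hv3]
  nlinarith [mul_le_mul_of_nonneg_left hchord (rpow_nonneg hv.le (-β))]

lemma integral_sq_rpow_neg_sub_rpow_neg_le {β r t : ℝ} (hβ0 : 0 < β) (hβ1 : β < 1 / 2)
    (hr : 0 < r) (hrt : r < t) :
    ∫ s in (0:ℝ)..r, ((t - s) ^ (-β) - (r - s) ^ (-β)) ^ 2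
      ≤ 2 * β / (1 - 2 * β) * (t - r) ^ (1 - 2 * β) := by
  have hp : 0 < 1 - 2 * β := by linarith
  have hp' : -1 < -(2 * β) := by linarith
  have hδ : 0 < t - r := sub_pos.2 hrt
  have h0 : (0 : ℝ) ∉ uIcc (t - r) (t - 0) := by
    rw [uIcc_of_le (by linarith)]
    exact fun h => hδ.not_ge h.1
  have hint₁ := intervalIntegrable_const_sub_rpow 0 r r (Or.inl hp')
  have hint₂ := intervalIntegrable_const_sub_rpow 0 r t (Or.inl hp')
  have hint₃ := intervalIntegrable_const_sub_rpow (e := -(2 * β) - 1) 0 r t (Or.inr h0)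
  have hchord := sub_mul_rpow_le_sub_rpow_div (e := -(2 * β)) (by linarith) (by linarith) hr
    hrt.le
  rw [show -(2 * β) + 1 = 1 - 2 * β by ring, le_div_iff₀ hp] at hchord
  have hδp : (t - r) ^ (1 - 2 * β) = (t - r) * (t - r) ^ (-(2 * β)) := by
    rw [show 1 - 2 * β = 1 + -(2 * β) by ring, rpow_add hδ, rpow_one]
  calc ∫ s in (0:ℝ)..r, ((t - s) ^ (-β) - (r - s) ^ (-β)) ^ 2
      ≤ ∫ s in (0:ℝ)..r, ((r - s) ^ (-(2 * β)) - (t - s) ^ (-(2 * β))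
          - 2 * β * (t - r) * (t - s) ^ (-(2 * β) - 1)) := by
        refine intervalIntegral.integral_mono_on_Ioo_of_nonneg hr.le (fun _ _ => sq_nonneg _)
          (fun s hs => ?_) ((hint₁.sub hint₂).sub (hint₃.const_mul _))
        simpa only [sub_sub_sub_cancel_right] using sq_rpow_neg_sub_rpow_neg_le
          (u := r - s) (v := t - s) hβ0 (sub_pos.2 hs.2) (by linarith)
    _ = r ^ (1 - 2 * β) / (1 - 2 * β) - (t ^ (1 - 2 * β) - (t - r) ^ (1 - 2 * β)) / (1 - 2 * β)
          - (t - r) * ((t - r) ^ (-(2 * β)) - t ^ (-(2 * β))) := by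
        rw [intervalIntegral.integral_sub (hint₁.sub hint₂) (hint₃.const_mul _),
          intervalIntegral.integral_sub hint₁ hint₂, intervalIntegral.integral_const_mul,
          integral_const_sub_rpow 0 r r (Or.inl hp'), integral_const_sub_rpow 0 r t (Or.inl hp'),
          integral_const_sub_rpow 0 r t (Or.inr ⟨by linarith, h0⟩)]
        simp only [sub_zero, sub_self, show -(2 * β) + 1 = 1 - 2 * β by ring,
          show -(2 * β) - 1 + 1 = -(2 * β) by ring, zero_rpow hp.ne']
        field_simp
        ring
    _ = 2 * β / (1 - 2 * β) * (t - r) ^ (1 - 2 * β)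
          - (t ^ (1 - 2 * β) - r ^ (1 - 2 * β) - (t - r) * t ^ (-(2 * β)) * (1 - 2 * β))
            / (1 - 2 * β) := by
        rw [hδp]
        field_simp
        ring
    _ ≤ 2 * β / (1 - 2 * β) * (t - r) ^ (1 - 2 * β) :=
        sub_le_self _ (div_nonneg (by linarith) hp.le)

theorem stmt_0 (β r t : ℝ) (hβ0 : 0 < β) (hβ1 : β < 1/2) (hr : 0 ≤ r) (hrt : r ≤ t) :
    ∫ s in (0:ℝ)..r, ((t - s) ^ (-β) - (r - s) ^ (-β)) ^ 2
      ≤ (2 * β / ((1 - β) * (1 - 2 * β))) * (t - r) ^ (1 - 2 * β) := by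
  have hp : 0 < 1 - 2 * β := by linarith
  obtain rfl | hr0 := hr.eq_or_lt
  · simp only [intervalIntegral.integral_same, sub_zero]
    exact mul_nonneg (div_nonneg (by linarith) (by nlinarith)) (rpow_nonneg hrt _)
  obtain rfl | hrt' := hrt.eq_or_lt
  · simp [zero_rpow hp.ne']
  calc _ ≤ 2 * β / (1 - 2 * β) * (t - r) ^ (1 - 2 * β) :=
        integral_sq_rpow_neg_sub_rpow_neg_le hβ0 hβ1 hr0 hrt'
    _ ≤ _ := by
        gcongr
        all_goals nlinarith
end

section
/- Discrete Gronwall inequality with weakly singular kernel: let 0 < γ < 1, b > 0, and suppose nonnegative reals H_0, …, H_N satisfy H_n ≤ π_n + b · Σ_{l=0}^{n-1} (n-l)^(-γ) H_l for all 0 ≤ n ≤ N, where (π_n) is nonnegative and nondecreasing. Then H_n ≤ E_{1-γ}(Γ(1-γ) · n^(1-γ) · b) · π_n for all 0 ≤ n ≤ N, where E_a(x) = Σ_{k≥0} x^k / Γ(ak+1) is the Mittag-Leffler function. -/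
/-!
Write `β = 1 - γ` and `M n = E_β(Γ(β) n^β b)`. Since `π` is nondecreasing, strong induction on `n`
gives `H n ≤ M n * π n` as soon as `M` is a supersolution: `1 + b ∑_{l<n} (n-l)^(β-1) M l ≤ M n`.
Expanding `M l` as a power series, the `k`-th term on the left contains
`∑_{l<n} l^(βk) (n-l)^(β-1)`, a lower Riemann sum of the Beta integral
`∫₀ⁿ s^(βk) (n-s)^(β-1) ds = n^(βk+β) Γ(βk+1) Γ(β) / Γ(βk+1+β)`. The resulting factor
`Γ(β) / Γ(β(k+1)+1)` turns the `k`-th term of the series into its `(k+1)`-th, and the constant term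
`1` of `M n` accounts for the forcing.
-/

open Real Finset

/-- The Mittag-Leffler function `E_a(x) = ∑_{k≥0} x^k / Γ(a k + 1)`. -/
noncomputable def mittagLeffler (a x : ℝ) : ℝ := ∑' k : ℕ, x ^ k / Real.Gamma (a * k + 1)

open Filter MeasureTheory
open scoped Nat

lemma factorial_floor_le_Gamma_add_one {s : ℝ} (hs : 1 ≤ s) : (⌊s⌋₊ ! : ℝ) ≤ Gamma (s + 1) := by
  rw [← Gamma_nat_eq_factorial]
  have hm : (1 : ℝ) ≤ ⌊s⌋₊ := by exact_mod_cast Nat.le_floor (by exact_mod_cast hs)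
  exact Gamma_strictMonoOn_Ici.monotoneOn (by simp only [Set.mem_Ici]; linarith)
    (by simp only [Set.mem_Ici]; linarith) (by linarith [Nat.floor_le (by linarith : 0 ≤ s)])

/-- The floor `m = ⌊βk⌋` splits `y ^ (βk) / Γ(βk+1) ≤ y ^ (m+1) / m!` into an exponential
factor `(2y)^m / m! ≤ exp (2y)` and a geometric factor `2^(-m) ≤ 2 (2^(-β))^k`. -/
lemma pow_div_Gamma_le_geometric {β x y : ℝ} (hx : 0 ≤ x) (hy : 1 ≤ y) (hxy : x ≤ y ^ β)
    {k : ℕ} (hk : 1 ≤ β * k) :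
    x ^ k / Gamma (β * k + 1) ≤ 2 * y * exp (2 * y) * ((1 / 2) ^ β) ^ k := by
  set m := ⌊β * k⌋₊
  have hlt_m : β * k < m + 1 := Nat.lt_floor_add_one _
  have hnum : x ^ k ≤ y ^ ((m : ℝ) + 1) :=
    calc x ^ k ≤ (y ^ β) ^ k := pow_le_pow_left₀ hx hxy k
      _ = y ^ (β * k) := (rpow_mul_natCast (by linarith) β k).symm
      _ ≤ y ^ ((m : ℝ) + 1) := rpow_le_rpow_of_exponent_le hy hlt_m.le
  have hgeom : ((1 : ℝ) / 2) ^ m ≤ 2 * ((1 / 2) ^ β) ^ k :=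
    calc ((1 : ℝ) / 2) ^ m = (1 / 2) ^ (m : ℝ) := (rpow_natCast _ _).symm
      _ ≤ (1 / 2) ^ (β * k - 1) := rpow_le_rpow_of_exponent_ge (by norm_num) (by norm_num)
          (by linarith)
      _ = 2 * ((1 / 2) ^ β) ^ k := by
          rw [rpow_sub (by norm_num), rpow_one, rpow_mul_natCast (by norm_num)]; ring
  calc x ^ k / Gamma (β * k + 1) ≤ y ^ ((m : ℝ) + 1) / m ! :=
        div_le_div₀ (by positivity) hnum (by positivity) (factorial_floor_le_Gamma_add_one hk)
    _ = y * ((2 * y) ^ m / m !) * (1 / 2) ^ m := by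
        rw [rpow_add (by linarith), rpow_one, rpow_natCast, mul_pow, div_pow, one_pow]
        field_simp
    _ ≤ y * exp (2 * y) * (2 * ((1 / 2) ^ β) ^ k) := by
        gcongr
        exact pow_div_factorial_le_exp _ (by linarith) m
    _ = 2 * y * exp (2 * y) * ((1 / 2) ^ β) ^ k := by ring

lemma summable_pow_div_Gamma {β : ℝ} (hβ : 0 < β) (x : ℝ) :
    Summable fun k : ℕ => x ^ k / Gamma (β * k + 1) := by
  set y := max 1 (|x| ^ (1 / β))
  have hy : 1 ≤ y := le_max_left _ _
  have hxy : |x| ≤ y ^ β :=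
    calc |x| = (|x| ^ (1 / β)) ^ β := by
          rw [← rpow_mul (abs_nonneg x), one_div_mul_cancel hβ.ne', rpow_one]
      _ ≤ y ^ β := rpow_le_rpow (by positivity) (le_max_right _ _) hβ.le
  have hr : (1 / 2 : ℝ) ^ β < 1 := rpow_lt_one (by norm_num) (by norm_num) hβ
  refine ((summable_geometric_of_lt_one (by positivity) hr).mul_left
    (2 * y * exp (2 * y))).of_norm_bounded_eventually_nat ?_
  filter_upwards [eventually_ge_atTop ⌈1 / β⌉₊] with k hk
  have hβk : 1 ≤ β * k := by
    rw [← div_le_iff₀' hβ]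
    exact (Nat.le_ceil _).trans (by exact_mod_cast hk)
  have hΓ : 0 < Gamma (β * k + 1) := Gamma_pos_of_pos (by linarith)
  rw [norm_div, norm_pow, Real.norm_eq_abs, Real.norm_eq_abs, abs_of_pos hΓ]
  exact pow_div_Gamma_le_geometric (abs_nonneg x) hy hxy hβk

lemma integral_rpow_mul_sub_rpow {a u v : ℝ} (ha : 0 < a) (hu : 0 < u) (hv : 0 < v) :
    ∫ x in (0 : ℝ)..a, x ^ (u - 1) * (a - x) ^ (v - 1) =
      a ^ (u + v - 1) * (Gamma u * Gamma v / Gamma (u + v)) := by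
  apply Complex.ofReal_injective
  have hcongr : ∀ x ∈ Set.uIcc (0 : ℝ) a, ((x ^ (u - 1) * (a - x) ^ (v - 1) : ℝ) : ℂ) =
      (x : ℂ) ^ ((u : ℂ) - 1) * ((a : ℂ) - x) ^ ((v : ℂ) - 1) := by
    intro x hx
    rw [Set.uIcc_of_le ha.le] at hx
    rw [Complex.ofReal_mul, Complex.ofReal_cpow hx.1, Complex.ofReal_cpow (by linarith [hx.2])]
    push_cast
    rfl
  rw [← intervalIntegral.integral_ofReal, intervalIntegral.integral_congr hcongr,
    Complex.betaIntegral_scaled _ _ ha,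
    Complex.betaIntegral_eq_Gamma_mul_div _ _ (by simpa using hu) (by simpa using hv)]
  push_cast
  rw [Complex.ofReal_cpow ha.le, ← Complex.Gamma_ofReal, ← Complex.Gamma_ofReal,
    ← Complex.Gamma_ofReal]
  push_cast
  rfl

lemma intervalIntegrable_rpow_mul_sub_rpow {a p r : ℝ} (hp : 0 ≤ p) (hr : -1 < r) (c d : ℝ) :
    IntervalIntegrable (fun x => x ^ p * (a - x) ^ r) volume c d := by
  have hsub : IntervalIntegrable (fun x : ℝ => (a - x) ^ r) volume c d := by
    simpa using
      (intervalIntegral.intervalIntegrable_rpow' (a := a - c) (b := a - d) hr).comp_sub_left a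
  exact hsub.continuousOn_mul (continuous_rpow_const hp).continuousOn

lemma sum_rpow_mul_sub_rpow_le {p v : ℝ} (hp : 0 ≤ p) (hv0 : 0 < v) (hv1 : v ≤ 1) (n : ℕ) :
    ∑ l ∈ range n, (l : ℝ) ^ p * ((n : ℝ) - l) ^ (v - 1) ≤
      (n : ℝ) ^ (p + v) * (Gamma (p + 1) * Gamma v / Gamma (p + 1 + v)) := by
  rcases Nat.eq_zero_or_pos n with rfl | hn
  · simp only [range_zero, sum_empty]
    exact mul_nonneg (by positivity)
      (div_nonneg (mul_nonneg (Gamma_nonneg_of_nonneg (by linarith)) (Gamma_nonneg_of_nonneg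
        hv0.le)) (Gamma_nonneg_of_nonneg (by linarith)))
  have hint : IntegrableOn (fun x : ℝ => x ^ p * ((n : ℝ) - x) ^ (v - 1))
      (Set.Ico ((0 : ℕ) : ℝ) n) := by
    rw [← intervalIntegrable_iff_integrableOn_Ico_of_le (by simp)]
    exact intervalIntegrable_rpow_mul_sub_rpow hp (by linarith) _ _
  have hmono : ∀ l ∈ Set.Ico 0 n, ∀ x ∈ Set.Ico (l : ℝ) ↑(l + 1),
      (l : ℝ) ^ p * ((n : ℝ) - l) ^ (v - 1) ≤ x ^ p * ((n : ℝ) - x) ^ (v - 1) := by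
    rintro l ⟨-, hl⟩ x ⟨hlx, hxl⟩
    have hxn : x < n := hxl.trans_le (by exact_mod_cast hl)
    exact mul_le_mul (rpow_le_rpow (Nat.cast_nonneg l) hlx hp)
      (rpow_le_rpow_of_nonpos (sub_pos.mpr hxn) (by linarith) (by linarith))
      (rpow_nonneg (by linarith) _) (rpow_nonneg (by linarith) _)
  have := sum_Ico_le_integral_of_le (f := fun x : ℝ => x ^ p * ((n : ℝ) - x) ^ (v - 1))
    (Nat.zero_le n) hmono hint
  rw [← range_eq_Ico, Nat.cast_zero,
    show p = (p + 1) - 1 by ring, integral_rpow_mul_sub_rpow (by positivity) (by linarith) hv0]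
    at this
  rwa [add_sub_cancel_right, show p + 1 + v - 1 = p + v by ring] at this

lemma mittagLeffler_nonneg {β x : ℝ} (hβ : 0 ≤ β) (hx : 0 ≤ x) : 0 ≤ mittagLeffler β x :=
  tsum_nonneg fun _ => div_nonneg (pow_nonneg hx _) (Gamma_nonneg_of_nonneg (by positivity))

lemma mittagLeffler_eq_one_add_tsum {β : ℝ} (hβ : 0 < β) (x : ℝ) :
    mittagLeffler β x = 1 + ∑' k : ℕ, x ^ (k + 1) / Gamma (β * ↑(k + 1) + 1) := by
  rw [mittagLeffler, (summable_pow_div_Gamma hβ x).tsum_eq_zero_add]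
  simp

lemma mul_sum_rpow_mul_pow_div_Gamma_le {β b : ℝ} (hβ0 : 0 < β) (hβ1 : β ≤ 1) (hb : 0 ≤ b)
    (n k : ℕ) :
    b * ∑ l ∈ range n, ((n : ℝ) - l) ^ (β - 1) *
        ((Gamma β * (l : ℝ) ^ β * b) ^ k / Gamma (β * k + 1)) ≤
      (Gamma β * (n : ℝ) ^ β * b) ^ (k + 1) / Gamma (β * ↑(k + 1) + 1) := by
  have hpow : ∀ (m : ℝ) (j : ℕ), 0 ≤ m →
      (Gamma β * m ^ β * b) ^ j = (Gamma β * b) ^ j * m ^ (β * j) := fun m j hm => by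
    rw [rpow_mul_natCast hm, ← mul_pow]; ring_nf
  have hΓβ : 0 < Gamma β := Gamma_pos_of_pos hβ0
  have hΓk : 0 < Gamma (β * k + 1) := Gamma_pos_of_pos (by positivity)
  have hΓk1 : 0 < Gamma (β * k + 1 + β) := Gamma_pos_of_pos (by positivity)
  calc b * ∑ l ∈ range n, ((n : ℝ) - l) ^ (β - 1) *
          ((Gamma β * (l : ℝ) ^ β * b) ^ k / Gamma (β * k + 1))
      = b * (Gamma β * b) ^ k / Gamma (β * k + 1) *
          ∑ l ∈ range n, (l : ℝ) ^ (β * k) * ((n : ℝ) - l) ^ (β - 1) := by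
        rw [mul_sum, mul_sum]
        refine sum_congr rfl fun l _ => ?_
        rw [hpow l k (Nat.cast_nonneg l)]
        ring
    _ ≤ b * (Gamma β * b) ^ k / Gamma (β * k + 1) *
          ((n : ℝ) ^ (β * k + β) * (Gamma (β * k + 1) * Gamma β / Gamma (β * k + 1 + β))) := by
        gcongr
        exact sum_rpow_mul_sub_rpow_le (by positivity) hβ0 hβ1 n
    _ = (Gamma β * (n : ℝ) ^ β * b) ^ (k + 1) / Gamma (β * ↑(k + 1) + 1) := by
        rw [hpow n (k + 1) (Nat.cast_nonneg n)]
        push_cast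
        rw [show β * (k + 1 : ℝ) = β * k + β by ring, show β * k + β + 1 = β * k + 1 + β by ring]
        field_simp
        ring

lemma one_add_mul_sum_le_mittagLeffler {β b : ℝ} (hβ0 : 0 < β) (hβ1 : β ≤ 1) (hb : 0 ≤ b)
    (n : ℕ) :
    1 + b * ∑ l ∈ range n, ((n : ℝ) - l) ^ (β - 1) *
        mittagLeffler β (Gamma β * (l : ℝ) ^ β * b) ≤
      mittagLeffler β (Gamma β * (n : ℝ) ^ β * b) := by
  set term : ℕ → ℕ → ℝ := fun l k => ((n : ℝ) - l) ^ (β - 1) *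
    ((Gamma β * (l : ℝ) ^ β * b) ^ k / Gamma (β * k + 1))
  have hterm : ∀ l, Summable (term l) := fun l =>
    (summable_pow_div_Gamma hβ0 _).mul_left _
  have hswap : b * ∑ l ∈ range n, ((n : ℝ) - l) ^ (β - 1) *
      mittagLeffler β (Gamma β * (l : ℝ) ^ β * b) = ∑' k, b * ∑ l ∈ range n, term l k := by
    rw [tsum_mul_left, Summable.tsum_finsetSum fun l _ => hterm l]
    simp only [term, mittagLeffler, tsum_mul_left]
  rw [hswap, mittagLeffler_eq_one_add_tsum hβ0]
  exact add_le_add_right (Summable.tsum_le_tsum (mul_sum_rpow_mul_pow_div_Gamma_le hβ0 hβ1 hb n)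
    ((summable_sum fun l _ => hterm l).mul_left b)
    ((summable_nat_add_iff 1).mpr (summable_pow_div_Gamma hβ0 _))) 1

theorem le_mul_of_le_add_sum {N : ℕ} {K : ℕ → ℕ → ℝ} {H P M : ℕ → ℝ}
    (hK : ∀ n l, l < n → 0 ≤ K n l) (hM0 : ∀ n ≤ N, 0 ≤ M n)
    (hM : ∀ n ≤ N, 1 + ∑ l ∈ range n, K n l * M l ≤ M n)
    (hP0 : ∀ n ≤ N, 0 ≤ P n) (hP : ∀ m n, m ≤ n → n ≤ N → P m ≤ P n)
    (hH : ∀ n ≤ N, H n ≤ P n + ∑ l ∈ range n, K n l * H l) :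
    ∀ n ≤ N, H n ≤ M n * P n := by
  intro n
  induction n using Nat.strong_induction_on with
  | _ n ih =>
    intro hn
    have hsum : ∑ l ∈ range n, K n l * H l ≤ (∑ l ∈ range n, K n l * M l) * P n := by
      rw [sum_mul]
      refine sum_le_sum fun l hl => ?_
      have hln := mem_range.mp hl
      rw [mul_assoc]
      gcongr
      · exact hK n l hln
      calc H l ≤ M l * P l := ih l hln (by omega)
        _ ≤ M l * P n := mul_le_mul_of_nonneg_left (hP l n hln.le hn) (hM0 l (by omega))
    calc H n ≤ P n + ∑ l ∈ range n, K n l * H l := hH n hn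
      _ ≤ (1 + ∑ l ∈ range n, K n l * M l) * P n := by linarith
      _ ≤ M n * P n := mul_le_mul_of_nonneg_right (hM n hn) (hP0 n hn)

theorem stmt_4_general (N : ℕ) (γ b : ℝ) (hγ0 : 0 < γ) (hγ1 : γ < 1) (hb : 0 < b)
    (H pi : ℕ → ℝ)
    (hpipos : ∀ n ≤ N, 0 ≤ pi n)
    (hpimono : ∀ m n, m ≤ n → n ≤ N → pi m ≤ pi n)
    (hrec : ∀ n ≤ N, H n ≤ pi n + b * ∑ l ∈ Finset.range n, ((n : ℝ) - l) ^ (-γ) * H l) :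
    ∀ n ≤ N, H n ≤ mittagLeffler (1 - γ) (Real.Gamma (1 - γ) * (n : ℝ) ^ (1 - γ) * b) * pi n := by
  have hβ0 : 0 < 1 - γ := by linarith
  have hexp : 1 - γ - 1 = -γ := by ring
  have hsuper := fun n => one_add_mul_sum_le_mittagLeffler hβ0 (by linarith) hb.le n
  simp only [hexp, mul_sum, ← mul_assoc] at hsuper
  simp only [mul_sum, ← mul_assoc] at hrec
  have hK : ∀ n l : ℕ, l < n → 0 ≤ b * ((n : ℝ) - l) ^ (-γ) := fun n l hl =>
    mul_nonneg hb.le (rpow_nonneg (sub_nonneg.mpr (by exact_mod_cast hl.le)) _)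
  exact le_mul_of_le_add_sum hK (fun n _ => mittagLeffler_nonneg hβ0.le (by positivity))
    (fun n _ => hsuper n) hpipos hpimono hrec

theorem stmt_4 (N : ℕ) (γ b : ℝ) (hγ0 : 0 < γ) (hγ1 : γ < 1) (hb : 0 < b)
    (H pi : ℕ → ℝ)
    (hHpos : ∀ n ≤ N, 0 ≤ H n)
    (hpipos : ∀ n ≤ N, 0 ≤ pi n)
    (hpimono : ∀ m n, m ≤ n → n ≤ N → pi m ≤ pi n)
    (hrec : ∀ n ≤ N, H n ≤ pi n + b * ∑ l ∈ Finset.range n, ((n : ℝ) - l) ^ (-γ) * H l) :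
    ∀ n ≤ N, H n ≤ mittagLeffler (1 - γ) (Real.Gamma (1 - γ) * (n : ℝ) ^ (1 - γ) * b) * pi n :=
  stmt_4_general N γ b hγ0 hγ1 hb H pi hpipos hpimono hrec
end

section
/- Let 0 < β < 1/2, h = 1/N for a positive integer N, set t_i = i·h, and let η(s) = t_i for s ∈ [t_i, t_{i+1}). Then for every 0 ≤ n ≤ N-1, ∫₀^{t_{n+1}} [(t_{n+1}-s)^(-β) - (t_{n+1}-η(s))^(-β)]² ds ≤ C · h^(1-2β), where C is a constant depending only on β. -/
/-!
Write `T = t_{n+1}` and `h = 1/N`. On `[0, T - h]` the mean value theorem gives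
`(T - s)^(-β) - (T - η s)^(-β) ≤ β h (T - s)^(-β-1)`, and
`∫_h^T x^(-2β-2) dx ≤ h^(-2β-1)/(2β+1)`, so this part contributes `O(h^(1-2β))`. On the last
subinterval `[T - h, T]` the difference is at most `(T - s)^(-β)`, whose square has integral
`h^(1-2β)/(1-2β)` because `2β < 1`.
-/

open Real MeasureTheory Set

theorem IntervalIntegrable.of_norm_le_on_Ioo {f g : ℝ → ℝ} {a b : ℝ} (hab : a ≤ b)
    (hg : IntervalIntegrable g volume a b) (hf : AEStronglyMeasurable f volume)
    (hfg : ∀ x ∈ Ioo a b, ‖f x‖ ≤ g x) : IntervalIntegrable f volume a b := by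
  refine hg.mono_fun' hf.restrict ?_
  rw [uIoc_of_le hab, ← Measure.restrict_congr_set Ioo_ae_eq_Ioc]
  exact ae_restrict_of_forall_mem measurableSet_Ioo hfg

theorem rpow_neg_sub_rpow_neg_le {β a b : ℝ} (hβ : 0 ≤ β) (ha : 0 < a) (hab : a ≤ b) :
    a ^ (-β) - b ^ (-β) ≤ β * (b - a) * a ^ (-β - 1) := by
  rcases hab.eq_or_lt with rfl | hab
  · simp
  have hpos : ∀ x ∈ Icc a b, 0 < x := fun x hx => ha.trans_le hx.1
  obtain ⟨c, hc, hslope⟩ := exists_hasDerivAt_eq_slope (fun x : ℝ => x ^ (-β)) _ hab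
    (continuousOn_id.rpow_const fun x hx => Or.inl (hpos x hx).ne')
    (fun x hx => hasDerivAt_rpow_const (Or.inl (hpos x (Ioo_subset_Icc_self hx)).ne'))
  rw [eq_div_iff (sub_pos.2 hab).ne'] at hslope
  have hc_le : c ^ (-β - 1) ≤ a ^ (-β - 1) := rpow_le_rpow_of_nonpos ha hc.1.le (by linarith)
  nlinarith [mul_le_mul_of_nonneg_left hc_le (mul_nonneg hβ (sub_pos.2 hab).le)]

theorem sq_rpow_neg_sub_rpow_neg_le_of_sub_le {β a b h : ℝ} (hβ : 0 ≤ β) (ha : 0 < a)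
    (hab : a ≤ b) (hbh : b - a ≤ h) :
    (a ^ (-β) - b ^ (-β)) ^ 2 ≤ β ^ 2 * h ^ 2 * a ^ (-2 * β - 2) := by
  have hdiff : 0 ≤ a ^ (-β) - b ^ (-β) :=
    sub_nonneg.2 (rpow_le_rpow_of_nonpos ha hab (by linarith))
  calc (a ^ (-β) - b ^ (-β)) ^ 2 ≤ (β * h * a ^ (-β - 1)) ^ 2 := by
        refine pow_le_pow_left₀ hdiff ((rpow_neg_sub_rpow_neg_le hβ ha hab).trans ?_) 2
        gcongr
    _ = β ^ 2 * h ^ 2 * a ^ (-2 * β - 2) := by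
        rw [mul_pow, ← rpow_mul_natCast ha.le]
        push_cast
        ring_nf

theorem sq_rpow_neg_sub_rpow_neg_le_s7 {β a b : ℝ} (hβ : 0 ≤ β) (ha : 0 < a) (hab : a ≤ b) :
    (a ^ (-β) - b ^ (-β)) ^ 2 ≤ a ^ (-2 * β) := by
  have hdiff : 0 ≤ a ^ (-β) - b ^ (-β) :=
    sub_nonneg.2 (rpow_le_rpow_of_nonpos ha hab (by linarith))
  calc (a ^ (-β) - b ^ (-β)) ^ 2 ≤ (a ^ (-β)) ^ 2 :=
        pow_le_pow_left₀ hdiff (sub_le_self _ (rpow_nonneg (ha.le.trans hab) _)) 2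
    _ = a ^ (-2 * β) := by
        rw [← rpow_mul_natCast ha.le]
        push_cast
        ring_nf

theorem intervalIntegrable_sub_rpow_of_lt {p a b T : ℝ} (ha : a < T) (hb : b < T) :
    IntervalIntegrable (fun s => (T - s) ^ p) volume a b := by
  refine ContinuousOn.intervalIntegrable fun s hs => ContinuousAt.continuousWithinAt ?_
  have hsT : T - s ≠ 0 := (sub_pos.2 (hs.2.trans_lt (max_lt ha hb))).ne'
  exact (continuousAt_const.sub continuousAt_id).rpow_const (Or.inl hsT)

theorem intervalIntegrable_sub_rpow_of_neg_one_lt {p : ℝ} (hp : -1 < p) (a b T : ℝ) :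
    IntervalIntegrable (fun s => (T - s) ^ p) volume a b := by
  simpa using
    (intervalIntegral.intervalIntegrable_rpow' (a := T - a) (b := T - b) hp).comp_sub_left T

theorem integral_sub_rpow_le_of_lt_neg_one {p h T : ℝ} (hp : p < -1) (hh : 0 < h)
    (hhT : h ≤ T) :
    ∫ s in (0 : ℝ)..T - h, (T - s) ^ p ≤ h ^ (p + 1) / -(p + 1) := by
  have hp1 : p + 1 < 0 := by linarith
  rw [intervalIntegral.integral_comp_sub_left (fun x => x ^ p), sub_sub_cancel, sub_zero,
    integral_rpow (Or.inr ⟨hp.ne, notMem_uIcc_of_lt hh (hh.trans_le hhT)⟩), div_neg,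
    div_le_iff_of_neg hp1, neg_mul, div_mul_cancel₀ _ hp1.ne]
  linarith [rpow_nonneg (hh.trans_le hhT).le (p + 1)]

theorem integral_sub_rpow_of_neg_one_lt {p : ℝ} (hp : -1 < p) (h T : ℝ) :
    ∫ s in T - h..T, (T - s) ^ p = h ^ (p + 1) / (p + 1) := by
  rw [intervalIntegral.integral_comp_sub_left (fun x => x ^ p), sub_self, sub_sub_cancel,
    integral_rpow (Or.inl hp), zero_rpow (by linarith), sub_zero]

theorem integral_sq_rpow_neg_sub_rpow_neg_le_s7 {β h T : ℝ} {η : ℝ → ℝ} (hβ0 : 0 ≤ β)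
    (hβ1 : β < 1 / 2) (hh : 0 < h) (hhT : h ≤ T) (hη : Measurable η)
    (hη_le : ∀ s, η s ≤ s) (hη_ge : ∀ s, s - h ≤ η s) :
    ∫ s in (0 : ℝ)..T, ((T - s) ^ (-β) - (T - η s) ^ (-β)) ^ 2
      ≤ (β ^ 2 / (1 + 2 * β) + 1 / (1 - 2 * β)) * h ^ (1 - 2 * β) := by
  set F := fun s => ((T - s) ^ (-β) - (T - η s) ^ (-β)) ^ 2
  have hF : AEStronglyMeasurable F volume := by fun_prop
  have hfar : ∀ s ∈ Ioo 0 (T - h), ‖F s‖ ≤ β ^ 2 * h ^ 2 * (T - s) ^ (-2 * β - 2) := by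
    intro s hs
    rw [Real.norm_of_nonneg (sq_nonneg _)]
    exact sq_rpow_neg_sub_rpow_neg_le_of_sub_le hβ0 (by linarith [hs.2]) (by linarith [hη_le s])
      (by linarith [hη_ge s])
  have hnear : ∀ s ∈ Ioo (T - h) T, ‖F s‖ ≤ (T - s) ^ (-2 * β) := by
    intro s hs
    rw [Real.norm_of_nonneg (sq_nonneg _)]
    exact sq_rpow_neg_sub_rpow_neg_le_s7 hβ0 (by linarith [hs.2]) (by linarith [hη_le s])
  have hG_far : IntervalIntegrable (fun s => β ^ 2 * h ^ 2 * (T - s) ^ (-2 * β - 2)) volume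
      0 (T - h) := (intervalIntegrable_sub_rpow_of_lt (by linarith) (by linarith)).const_mul _
  have hG_near :=
    intervalIntegrable_sub_rpow_of_neg_one_lt (p := -2 * β) (by linarith) (T - h) T T
  have hF_far := hG_far.of_norm_le_on_Ioo (by linarith) hF hfar
  have hF_near := hG_near.of_norm_le_on_Ioo (by linarith) hF hnear
  calc ∫ s in (0 : ℝ)..T, F s = (∫ s in (0 : ℝ)..T - h, F s) + ∫ s in T - h..T, F s :=
        (intervalIntegral.integral_add_adjacent_intervals hF_far hF_near).symm
    _ ≤ (∫ s in (0 : ℝ)..T - h, β ^ 2 * h ^ 2 * (T - s) ^ (-2 * β - 2))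
          + ∫ s in T - h..T, (T - s) ^ (-2 * β) := by
        gcongr
        · exact intervalIntegral.integral_mono_on_of_le_Ioo (by linarith) hF_far hG_far
            fun s hs => (le_abs_self _).trans (hfar s hs)
        · exact intervalIntegral.integral_mono_on_of_le_Ioo (by linarith) hF_near hG_near
            fun s hs => (le_abs_self _).trans (hnear s hs)
    _ ≤ β ^ 2 * h ^ 2 * (h ^ (-2 * β - 2 + 1) / -(-2 * β - 2 + 1))
          + h ^ (-2 * β + 1) / (-2 * β + 1) := by
        rw [intervalIntegral.integral_const_mul, integral_sub_rpow_of_neg_one_lt (by linarith)]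
        gcongr
        exact integral_sub_rpow_le_of_lt_neg_one (by linarith) hh hhT
    _ = (β ^ 2 / (1 + 2 * β) + 1 / (1 - 2 * β)) * h ^ (1 - 2 * β) := by
        rw [show -(-2 * β - 2 + 1) = 1 + 2 * β by ring,
          show -2 * β - 2 + 1 = 1 - 2 * β - 2 by ring, show -2 * β + 1 = 1 - 2 * β by ring,
          rpow_sub hh, rpow_two]
        field_simp

theorem stmt_7 (β : ℝ) (hβ0 : 0 < β) (hβ1 : β < 1/2) :
    ∃ C > 0, ∀ N : ℕ, 0 < N → ∀ n : ℕ, n ≤ N - 1 →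
      ∫ s in (0:ℝ)..((n + 1 : ℝ) / N),
          (((n + 1 : ℝ) / N - s) ^ (-β) - ((n + 1 : ℝ) / N - (↑⌊s * N⌋ : ℝ) / N) ^ (-β)) ^ 2
        ≤ C * ((1 : ℝ) / N) ^ (1 - 2 * β) := by
  refine ⟨β ^ 2 / (1 + 2 * β) + 1 / (1 - 2 * β),
    add_pos_of_nonneg_of_pos (by positivity) (one_div_pos.2 (by linarith)), ?_⟩
  intro N hN n _
  have hN' : (0 : ℝ) < N := Nat.cast_pos.2 hN
  refine integral_sq_rpow_neg_sub_rpow_neg_le_s7 hβ0.le hβ1 (by positivity)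
    (div_le_div_of_nonneg_right (by linarith [n.cast_nonneg (α := ℝ)]) hN'.le) (by fun_prop)
    (fun s => ?_) (fun s => ?_)
  · rw [div_le_iff₀ hN']
    exact Int.floor_le _
  · rw [sub_le_iff_le_add, ← add_div, le_div_iff₀ hN']
    linarith [Int.lt_floor_add_one (s * N)]
end
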